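/- Let V = V_0̄ ⊕ V_1̄ be a vector superspace over C and let g = gl(V) act on V in the standard way. Then gl(V) is a Berger superalgebra: the span of { R(x,y) : R ∈ R(gl(V)), x, y ∈ V } is all of gl(V), provided dim V_0̄ + dim V_1̄ ≥ 2. -/

import Mathlib

/-- A vector superspace structure on `V`: a pair of complementary subspaces. -/
structure SuperSpace (k V : Type*) [Field k] [AddCommGroup V] [Module k V] where
  even : Submodule k V
  odd : Submodule k V
  isCompl : IsCompl even odd

variable {k V : Type*} [Field k] [AddCommGroup V] [Module k V]

/-- The subspace of elements of parity `p`. -/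
def SuperSpace.part (S : SuperSpace k V) (p : ZMod 2) : Submodule k V :=
  if p = 0 then S.even else S.odd

/-- The sign `(-1)^p`. -/
def sg (k : Type*) [Field k] (p : ZMod 2) : k := if p = 1 then -1 else 1

/-- `A` is a homogeneous endomorphism of parity `p`. -/
def SuperSpace.HomEnd (S : SuperSpace k V) (p : ZMod 2) (A : Module.End k V) : Prop :=
  ∀ q x, x ∈ S.part q → A x ∈ S.part (q + p)

/-- Supercommutator of endomorphisms of parities `pa`, `pb`. -/
def sbr (pa pb : ZMod 2) (A B : Module.End k V) : Module.End k V :=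
  A * B - sg k (pa * pb) • (B * A)

/-- Super skew-symmetry of a bilinear map with operator values. -/
def SuperSkew (S : SuperSpace k V) (R : V →ₗ[k] V →ₗ[k] Module.End k V) : Prop :=
  ∀ p q x y, x ∈ S.part p → y ∈ S.part q → R x y = - sg k (p * q) • R y x

/-- The first Bianchi super-identity. -/
def Bianchi (S : SuperSpace k V) (R : V →ₗ[k] V →ₗ[k] Module.End k V) : Prop :=
  ∀ p q r x y z, x ∈ S.part p → y ∈ S.part q → z ∈ S.part r →
    R x y z + sg k (p * (q + r)) • R y z x + sg k (r * (p + q)) • R z x y = 0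

/-- `R` is an algebraic curvature tensor of type `g`. -/
def CurvOf (S : SuperSpace k V) (g : Submodule k (Module.End k V))
    (R : V →ₗ[k] V →ₗ[k] Module.End k V) : Prop :=
  (∀ x y, R x y ∈ g) ∧ SuperSkew S R ∧ Bianchi S R

/-- `R` is homogeneous of parity `pR`: `R x y` has parity `pR + |x| + |y|`. -/
def HomCurv (S : SuperSpace k V) (pR : ZMod 2)
    (R : V →ₗ[k] V →ₗ[k] Module.End k V) : Prop :=
  ∀ p q x y, x ∈ S.part p → y ∈ S.part q → S.HomEnd (pR + p + q) (R x y)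

/-!
For a covector `φ` of parity `f` and a super-symmetric `α : V → gl(V)` (an element of the first
prolongation of `gl(V)`), `R(x,y) = φ(x)α(y) - (-1)^{|x||y|} φ(y)α(x)` is an algebraic curvature
tensor. Given a homogeneous covector `χ` and `v ∈ V`, pick a homogeneous `y ≠ 0` with `χ(y) = 0`
and a homogeneous `x ∉ k y` (this is where `dim V ≥ 2` enters), covectors `φ` of parity `|x|` with
`φ(x) = 1`, `φ(y) = 0` and `ψ` of parity `|y|` with `ψ(y) = 1`, and let `α` be the
super-symmetrisation of `ψ ⊗ χ ⊗ v`. Then `R(x,y) = α(y) = χ ⊗ v`, and these rank-one operators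
span `gl(V)`.
-/

lemma ZMod.eq_zero_or_eq_one (p : ZMod 2) : p = 0 ∨ p = 1 := by
  revert p; decide

lemma ZMod.eq_add_one_of_ne {p q : ZMod 2} (h : p ≠ q) : p = q + 1 := by
  revert p q; decide

lemma sg_zero : sg k 0 = 1 := if_neg zero_ne_one

lemma LinearMap.span_smulRight_eq_top {R M N : Type*} [CommRing R] [AddCommGroup M]
    [Module R M] [AddCommGroup N] [Module R N] [Module.Finite R M] [Module.Projective R M] :
    Submodule.span R {A : M →ₗ[R] N | ∃ (f : Module.Dual R M) (n : N), f.smulRight n = A} =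
      ⊤ := by
  rw [← LinearMap.range_eq_top.2 (dualTensorHom_bijective (R := R) (M := M) (N := N)).2,
    LinearMap.range_eq_map, ← TensorProduct.span_tmul_eq_top, Submodule.map_span]
  congr 1
  ext A
  constructor
  · rintro ⟨f, n, rfl⟩
    exact ⟨f ⊗ₜ n, ⟨f, n, rfl⟩, by ext; simp⟩
  · rintro ⟨_, ⟨f, n, rfl⟩, rfl⟩
    exact ⟨f, n, by ext; simp⟩

namespace SuperSpace

variable (S : SuperSpace k V)

lemma part_zero : S.part 0 = S.even := if_pos rfl

lemma part_one : S.part 1 = S.odd := if_neg (by decide)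

lemma isCompl_part (p : ZMod 2) : IsCompl (S.part p) (S.part (p + 1)) := by
  fin_cases p
  · exact S.isCompl
  · exact S.isCompl.symm

noncomputable def proj (p : ZMod 2) : V →ₗ[k] V :=
  (S.part p).projection _ (S.isCompl_part p)

variable {S}

lemma proj_mem (p : ZMod 2) (x : V) : S.proj p x ∈ S.part p :=
  Submodule.projection_apply_mem _ x

lemma proj_apply_of_mem {p : ZMod 2} {x : V} (hx : x ∈ S.part p) : S.proj p x = x :=
  Submodule.projection_apply_of_mem_left _ hx

lemma proj_apply_of_mem_of_ne {p q : ZMod 2} {x : V} (hx : x ∈ S.part q) (hqp : q ≠ p) :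
    S.proj p x = 0 := by
  obtain rfl := ZMod.eq_add_one_of_ne hqp
  exact Submodule.projection_apply_of_mem_right _ hx

lemma proj_zero_add_proj_one (x : V) : S.proj 0 x + S.proj 1 x = x := by
  have hx : x - S.proj 0 x ∈ S.part 1 := Submodule.sub_projection_mem (S.isCompl_part 0) x
  have h1 : S.proj 1 x = x - S.proj 0 x :=
    calc S.proj 1 x = S.proj 1 (S.proj 0 x) + S.proj 1 (x - S.proj 0 x) := by
          rw [← map_add, add_sub_cancel]
      _ = x - S.proj 0 x := by
          rw [proj_apply_of_mem_of_ne (proj_mem 0 x) (by decide), proj_apply_of_mem hx, zero_add]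
  rw [h1, add_sub_cancel]

def DualHasParity (S : SuperSpace k V) (f : ZMod 2) (φ : Module.Dual k V) : Prop :=
  ∀ x ∈ S.part (f + 1), φ x = 0

lemma DualHasParity.apply_eq_zero {f p : ZMod 2} {φ : Module.Dual k V}
    (hφ : S.DualHasParity f φ) {x : V} (hx : x ∈ S.part p) (hpf : p ≠ f) : φ x = 0 :=
  hφ x (ZMod.eq_add_one_of_ne hpf ▸ hx)

lemma dualHasParity_comp_proj (f : ZMod 2) (φ : Module.Dual k V) :
    S.DualHasParity f (φ ∘ₗ S.proj f) := fun x hx => by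
  simp [proj_apply_of_mem_of_ne (p := f) hx (by simp)]

noncomputable def parityOp (S : SuperSpace k V) (f : ZMod 2) : Module.End k V :=
  S.proj 0 + sg k f • S.proj 1

lemma parityOp_apply_of_mem (f : ZMod 2) {p : ZMod 2} {x : V} (hx : x ∈ S.part p) :
    S.parityOp f x = sg k (f * p) • x := by
  rcases ZMod.eq_zero_or_eq_one p with rfl | rfl
  · simp [parityOp, proj_apply_of_mem hx, proj_apply_of_mem_of_ne hx zero_ne_one, sg_zero]
  · simp [parityOp, proj_apply_of_mem hx, proj_apply_of_mem_of_ne hx one_ne_zero]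

def IsSuperSymmetric (S : SuperSpace k V) (α : V →ₗ[k] Module.End k V) : Prop :=
  ∀ p q x y, x ∈ S.part p → y ∈ S.part q → α x y = sg k (p * q) • α y x

/-- Since `φ y ≠ 0` forces `|y| = f`, the sign `(-1)^{|x||y|}` of `R(x,y)` may be replaced by
`(-1)^{f|x|}`, which is linear in `x` through `S.parityOp f`. -/
noncomputable def prolongationCurv (S : SuperSpace k V) (f : ZMod 2) (φ : Module.Dual k V)
    (α : V →ₗ[k] Module.End k V) : V →ₗ[k] V →ₗ[k] Module.End k V :=
  φ.smulRight α - (φ.smulRight (α ∘ₗ S.parityOp f)).flip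

lemma prolongationCurv_apply_of_mem (f : ZMod 2) (φ : Module.Dual k V)
    (α : V →ₗ[k] Module.End k V) {p : ZMod 2} {x : V} (hx : x ∈ S.part p) (y : V) :
    S.prolongationCurv f φ α x y = φ x • α y - sg k (f * p) • φ y • α x := by
  simp [prolongationCurv, parityOp_apply_of_mem f hx, smul_comm (φ y)]

lemma superSkew_prolongationCurv {f : ZMod 2} {φ : Module.Dual k V}
    (hφ : S.DualHasParity f φ) (α : V →ₗ[k] Module.End k V) :
    SuperSkew S (S.prolongationCurv f φ α) := by
  intro p q x y hx hy
  rw [prolongationCurv_apply_of_mem f φ α hx, prolongationCurv_apply_of_mem f φ α hy]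
  rcases ZMod.eq_zero_or_eq_one f with rfl | rfl <;>
    rcases ZMod.eq_zero_or_eq_one p with rfl | rfl <;>
    rcases ZMod.eq_zero_or_eq_one q with rfl | rfl <;>
    simp +decide [sg, hφ.apply_eq_zero hx, hφ.apply_eq_zero hy, add_comm]

lemma bianchi_prolongationCurv {f : ZMod 2} {φ : Module.Dual k V}
    (hφ : S.DualHasParity f φ) {α : V →ₗ[k] Module.End k V} (hα : S.IsSuperSymmetric α) :
    Bianchi S (S.prolongationCurv f φ α) := by
  intro p q r x y z hx hy hz
  simp only [prolongationCurv_apply_of_mem f φ α hx, prolongationCurv_apply_of_mem f φ α hy,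
    prolongationCurv_apply_of_mem f φ α hz, LinearMap.sub_apply, LinearMap.smul_apply]
  rw [hα _ _ z x hz hx, hα _ _ y x hy hx, hα _ _ z y hz hy]
  rcases ZMod.eq_zero_or_eq_one f with rfl | rfl <;>
    rcases ZMod.eq_zero_or_eq_one p with rfl | rfl <;>
    rcases ZMod.eq_zero_or_eq_one q with rfl | rfl <;>
    rcases ZMod.eq_zero_or_eq_one r with rfl | rfl <;>
    simp +decide [sg, hφ.apply_eq_zero hx, hφ.apply_eq_zero hy, hφ.apply_eq_zero hz] <;> module

noncomputable def superSymProd (a b : ZMod 2) (ψ χ : Module.Dual k V) (v : V) :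
    V →ₗ[k] Module.End k V :=
  ψ.smulRight (χ.smulRight v) + sg k (a * b) • χ.smulRight (ψ.smulRight v)

lemma superSymProd_apply (a b : ZMod 2) (ψ χ : Module.Dual k V) (v x y : V) :
    superSymProd a b ψ χ v x y = ψ x • χ y • v + sg k (a * b) • χ x • ψ y • v := by
  simp [superSymProd]

lemma isSuperSymmetric_superSymProd {a b : ZMod 2} {ψ χ : Module.Dual k V}
    (hψ : S.DualHasParity a ψ) (hχ : S.DualHasParity b χ) (v : V) :
    S.IsSuperSymmetric (superSymProd a b ψ χ v) := by
  intro p q x y hx hy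
  simp only [superSymProd_apply]
  rcases ZMod.eq_zero_or_eq_one a with rfl | rfl <;>
    rcases ZMod.eq_zero_or_eq_one b with rfl | rfl <;>
    rcases ZMod.eq_zero_or_eq_one p with rfl | rfl <;>
    rcases ZMod.eq_zero_or_eq_one q with rfl | rfl <;>
    simp +decide [sg, hψ.apply_eq_zero hx, hψ.apply_eq_zero hy, hχ.apply_eq_zero hx,
      hχ.apply_eq_zero hy] <;> module

lemma exists_dualHasParity {p q : ZMod 2} {x y : V} (hx : x ∈ S.part p) (hy : y ∈ S.part q)
    (hxy : x ∉ k ∙ y) :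
    ∃ φ : Module.Dual k V, S.DualHasParity p φ ∧ φ x = 1 ∧ φ y = 0 := by
  have hy' : S.proj p y ∈ k ∙ y := by
    by_cases hqp : q = p
    · rw [← hqp, proj_apply_of_mem hy]
      exact Submodule.mem_span_singleton_self y
    · rw [proj_apply_of_mem_of_ne hy hqp]
      exact zero_mem _
  obtain ⟨φ, hφx, hφy⟩ := Submodule.exists_dual_map_eq_bot_of_notMem
    (fun h => hxy (Submodule.span_singleton_le_iff_mem _ _ |>.2 hy' h)) inferInstance
  have hφy' : φ (S.proj p y) = 0 := (Submodule.eq_bot_iff _).1 hφy _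
    (Submodule.mem_map_of_mem (Submodule.mem_span_singleton_self _))
  refine ⟨((φ x)⁻¹ • φ) ∘ₗ S.proj p, dualHasParity_comp_proj p _, ?_, ?_⟩
  · simp [proj_apply_of_mem hx, hφx]
  · simp [hφy']

lemma exists_homogeneous_notMem_span_singleton (hdim : 2 ≤ Module.finrank k V) (y : V) :
    ∃ p x, x ∈ S.part p ∧ x ∉ k ∙ y := by
  by_contra! h
  have htop : ⊤ ≤ k ∙ y := by
    rw [← S.isCompl.sup_eq_top, sup_le_iff]
    exact ⟨fun x hx => h 0 x (S.part_zero ▸ hx), fun x hx => h 1 x (S.part_one ▸ hx)⟩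
  have h := (Submodule.finrank_mono htop).trans (finrank_span_le_card {y})
  simp only [finrank_top, Set.toFinset_singleton, Finset.card_singleton] at h
  omega

variable [FiniteDimensional k V]

lemma exists_homogeneous_ne_zero_apply_eq_zero (hdim : 2 ≤ Module.finrank k V) {c : ZMod 2}
    {χ : Module.Dual k V} (hχ : S.DualHasParity c χ) :
    ∃ q y, y ∈ S.part q ∧ y ≠ 0 ∧ χ y = 0 := by
  by_cases hbot : S.part (c + 1) = ⊥
  · have htop : S.part c = ⊤ := eq_top_of_isCompl_bot (hbot ▸ S.isCompl_part c)
    obtain ⟨y, hy, hy0⟩ := (Submodule.ne_bot_iff _).1 <|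
      χ.ker_ne_bot_of_finrank_lt (by rw [Module.finrank_self]; omega)
    exact ⟨c, y, htop ▸ Submodule.mem_top, hy0, hy⟩
  · obtain ⟨y, hy, hy0⟩ := (Submodule.ne_bot_iff _).1 hbot
    exact ⟨c + 1, y, hy, hy0, hχ y hy⟩

def curvatureValues (S : SuperSpace k V) : Set (Module.End k V) :=
  {A | ∃ R, SuperSkew S R ∧ Bianchi S R ∧ ∃ x y, A = R x y}

lemma smulRight_mem_span_curvatureValues (hdim : 2 ≤ Module.finrank k V) {c : ZMod 2}
    {χ : Module.Dual k V} (hχ : S.DualHasParity c χ) (v : V) :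
    χ.smulRight v ∈ Submodule.span k S.curvatureValues := by
  obtain ⟨q, y, hy, hy0, hχy⟩ := exists_homogeneous_ne_zero_apply_eq_zero hdim hχ
  obtain ⟨p, x, hx, hxy⟩ := exists_homogeneous_notMem_span_singleton (S := S) hdim y
  obtain ⟨φ, hφ, hφx, hφy⟩ := exists_dualHasParity hx hy hxy
  obtain ⟨ψ, hψ, hψy, -⟩ :=
    exists_dualHasParity hy (zero_mem (S.part 0)) (by simpa using hy0)
  refine Submodule.subset_span ⟨S.prolongationCurv p φ (superSymProd q c ψ χ v),
    superSkew_prolongationCurv hφ _, bianchi_prolongationCurv hφ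
      (isSuperSymmetric_superSymProd hψ hχ v), x, y, ?_⟩
  ext z
  simp [prolongationCurv_apply_of_mem p φ _ hx, superSymProd_apply, hφx, hφy, hψy, hχy]

end SuperSpace

/-- for a complex vector superspace `V` with `dim V₀ + dim V₁ ≥ 2`,
`gl(V)` is a Berger superalgebra: the span of the values of all algebraic curvature
tensors of type `gl(V)` is all of `gl(V)`. -/
theorem gl_is_berger {V : Type*} [AddCommGroup V] [Module ℂ V] [FiniteDimensional ℂ V]
    (S : SuperSpace ℂ V) (hdim : 2 ≤ Module.finrank ℂ V) :
    Submodule.span ℂ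
      {A : Module.End ℂ V | ∃ R, SuperSkew S R ∧ Bianchi S R ∧ ∃ x y, A = R x y}
      = ⊤ := by
  rw [eq_top_iff, ← LinearMap.span_smulRight_eq_top, Submodule.span_le]
  rintro _ ⟨ξ, v, rfl⟩
  have hξ : ξ.smulRight v =
      (ξ ∘ₗ S.proj 0).smulRight v + (ξ ∘ₗ S.proj 1).smulRight v := by
    ext x
    simp [← add_smul, ← map_add, SuperSpace.proj_zero_add_proj_one]
  rw [hξ]
  refine add_mem ?_ ?_ <;>
    exact SuperSpace.smulRight_mem_span_curvatureValues hdim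
      (SuperSpace.dualHasParity_comp_proj _ ξ) v
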